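/- Trace identity: with T = 3A³(P_g⊗I)A³ on Λ³H, H n-dimensional and g ∈ Λ²H a unit vector, one has tr T = n - 2. -/

import Mathlib

noncomputable section
open scoped BigOperators ComplexConjugate InnerProductSpace

/-- The 1-particle space. -/
abbrev HS (n : ℕ) := EuclideanSpace ℂ (Fin n)
/-- Model for H^{⊗2}; Λ²H sits inside as the antisymmetric tensors. -/
abbrev Sq (n : ℕ) := EuclideanSpace ℂ (Fin 2 → Fin n)
/-- Model for H^{⊗3}; Λ³H sits inside as the antisymmetric tensors. -/
abbrev Cube (n : ℕ) := EuclideanSpace ℂ (Fin 3 → Fin n)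

/-- 2-particle wedge with convention ⟨u₁∧u₂, v₁∧v₂⟩ = (1/2!)det(⟨uᵢ,vⱼ⟩). -/
def wedge2 (n : ℕ) (u v : HS n) : Sq n :=
  WithLp.toLp 2 (fun x => (2 : ℂ)⁻¹ * (u (x 0) * v (x 1) - u (x 1) * v (x 0)))

/-- The 3-particle antisymmetrizer A³ on H^{⊗3}. -/
def alt3 (n : ℕ) : Cube n →ₗ[ℂ] Cube n where
  toFun T := WithLp.toLp 2 (fun x => (6 : ℂ)⁻¹ *
    ∑ σ : Equiv.Perm (Fin 3), ((Equiv.Perm.sign σ : ℤ) : ℂ) * T (x ∘ σ))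
  map_add' T S := by
    ext x
    simp [PiLp.add_apply, mul_add, Finset.sum_add_distrib]
  map_smul' c T := by
    ext x
    simp [PiLp.smul_apply, Finset.mul_sum, smul_eq_mul]
    ring_nf
    congr 1
    ext σ
    ring

/-- 3-particle wedge with convention ⟨u₁∧u₂∧u₃, v₁∧v₂∧v₃⟩ = (1/3!)det(⟨uᵢ,vⱼ⟩). -/
def wedge3 (n : ℕ) (u v w : HS n) : Cube n :=
  WithLp.toLp 2 (fun x => (6 : ℂ)⁻¹ * ∑ σ : Equiv.Perm (Fin 3),
    ((Equiv.Perm.sign σ : ℤ) : ℂ) * (u (x (σ 0)) * v (x (σ 1)) * w (x (σ 2))))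

/-- Wedge of a 2-particle function with a 1-particle function: g ∧ φ = A³(g ⊗ φ). -/
def wedgeSV (n : ℕ) (g : Sq n) (v : HS n) : Cube n :=
  alt3 n (WithLp.toLp 2 (fun x => g ![x 0, x 1] * v (x 2)))

/-- P²_g ⊗ I¹ acting on H^{⊗3}. -/
def pgI (n : ℕ) (g : Sq n) : Cube n →ₗ[ℂ] Cube n where
  toFun T := WithLp.toLp 2 (fun x => g ![x 0, x 1] *
    ∑ y : Fin 2 → Fin n, conj (g y) * T ![y 0, y 1, x 2])
  map_add' T S := by
    ext x
    simp [PiLp.add_apply, mul_add, Finset.sum_add_distrib]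
  map_smul' c T := by
    ext x
    simp [PiLp.smul_apply, Finset.mul_sum, smul_eq_mul]
    ring_nf
    congr 1
    ext y
    ring

/-- The operator 3P²_g ∧ I¹ = 3A³(P²_g ⊗ I¹)A³ (as an operator on H^{⊗3}; it
vanishes on the orthogonal complement of Λ³H and restricts to Λ³H). -/
def T3 (n : ℕ) (g : Sq n) : Cube n →ₗ[ℂ] Cube n :=
  (3 : ℂ) • (alt3 n ∘ₗ pgI n g ∘ₗ alt3 n)

lemma alt3_apply (n : ℕ) (T : Cube n) (x : Fin 3 → Fin n) :
    alt3 n T x = (6 : ℂ)⁻¹ *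
      ∑ σ : Equiv.Perm (Fin 3), ((Equiv.Perm.sign σ : ℤ) : ℂ) * T (x ∘ σ) := rfl

lemma sign_sq (τ : Equiv.Perm (Fin 3)) :
    ((Equiv.Perm.sign τ : ℤ) : ℂ) * ((Equiv.Perm.sign τ : ℤ) : ℂ) = 1 := by
  rcases Int.units_eq_one_or (Equiv.Perm.sign τ) with h | h <;> rw [h] <;> norm_num

lemma alt3_shift (n : ℕ) (T : Cube n) (x : Fin 3 → Fin n) (τ : Equiv.Perm (Fin 3)) :
    alt3 n T (x ∘ τ) = ((Equiv.Perm.sign τ : ℤ) : ℂ) * alt3 n T x := by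
  have key : ∑ σ : Equiv.Perm (Fin 3),
      ((Equiv.Perm.sign σ : ℤ) : ℂ) * T ((x ∘ ⇑τ) ∘ ⇑σ)
      = ∑ σ : Equiv.Perm (Fin 3),
      ((Equiv.Perm.sign τ : ℤ) : ℂ) * (((Equiv.Perm.sign σ : ℤ) : ℂ) * T (x ∘ ⇑σ)) := by
    apply Fintype.sum_equiv (Equiv.mulLeft τ)
    intro σ
    have hc : (x ∘ ⇑τ) ∘ ⇑σ = x ∘ ⇑(τ * σ) := by
      funext i; simp [Equiv.Perm.mul_apply]
    rw [hc, Equiv.coe_mulLeft, map_mul]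
    rcases Int.units_eq_one_or (Equiv.Perm.sign τ) with h | h <;>
      rcases Int.units_eq_one_or (Equiv.Perm.sign σ) with h' | h' <;>
      rw [h, h'] <;> norm_num
  rw [alt3_apply, alt3_apply, key, ← Finset.mul_sum]
  ring

lemma alt3_idem (n : ℕ) : alt3 n ∘ₗ alt3 n = alt3 n := by
  apply LinearMap.ext
  intro T
  ext x
  show alt3 n (alt3 n T) x = alt3 n T x
  rw [alt3_apply]
  have : ∀ σ : Equiv.Perm (Fin 3),
      ((Equiv.Perm.sign σ : ℤ) : ℂ) * (alt3 n T) (x ∘ σ) = alt3 n T x := by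
    intro σ
    rw [alt3_shift, ← mul_assoc, sign_sq, one_mul]
  simp only [this, Finset.sum_const, Finset.card_univ]
  rw [Fintype.card_perm]
  norm_num [Nat.factorial]
  ring

lemma trace_eq (n : ℕ) (M : Cube n →ₗ[ℂ] Cube n) :
    ∑ x : Fin 3 → Fin n, (M (EuclideanSpace.single x 1)) x
      = LinearMap.trace ℂ (Cube n) M := by
  rw [LinearMap.trace_eq_matrix_trace ℂ
    ((EuclideanSpace.basisFun (Fin 3 → Fin n) ℂ).toBasis) M, Matrix.trace]
  apply Finset.sum_congr rfl
  intro x _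
  rw [Matrix.diag_apply, LinearMap.toMatrix_apply,
    OrthonormalBasis.coe_toBasis_repr_apply, EuclideanSpace.basisFun_repr,
    OrthonormalBasis.coe_toBasis, EuclideanSpace.basisFun_apply]


lemma sum3 {n : ℕ} (f : (Fin 3 → Fin n) → ℂ) :
    ∑ x : Fin 3 → Fin n, f x = ∑ a : Fin n, ∑ b : Fin n, ∑ c : Fin n, f ![a, b, c] := by
  have : ∑ p : Fin n × Fin n × Fin n, f ![p.1, p.2.1, p.2.2]
      = ∑ a : Fin n, ∑ b : Fin n, ∑ c : Fin n, f ![a, b, c] := by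
    rw [Fintype.sum_prod_type]
    simp [Fintype.sum_prod_type]
  rw [← this]
  apply Fintype.sum_equiv ⟨fun x => (x 0, x 1, x 2), fun p => ![p.1, p.2.1, p.2.2],
    fun x => by funext i; fin_cases i <;> rfl, fun p => rfl⟩
  intro x
  congr 1
  funext i; fin_cases i <;> rfl

lemma sum2 {n : ℕ} (f : (Fin 2 → Fin n) → ℂ) :
    ∑ y : Fin 2 → Fin n, f y = ∑ p : Fin n, ∑ q : Fin n, f ![p, q] := by
  have : ∑ p : Fin n × Fin n, f ![p.1, p.2]
      = ∑ p : Fin n, ∑ q : Fin n, f ![p, q] := by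
    rw [Fintype.sum_prod_type]
  rw [← this]
  apply Fintype.sum_equiv ⟨fun x => (x 0, x 1), fun p => ![p.1, p.2],
    fun x => by funext i; fin_cases i <;> rfl, fun p => rfl⟩
  intro x
  congr 1
  funext i; fin_cases i <;> rfl

lemma perm6 (f : Equiv.Perm (Fin 3) → ℂ) : ∑ σ : Equiv.Perm (Fin 3), f σ =
    f 1 + f (Equiv.swap 0 1) + f (Equiv.swap 0 2) + f (Equiv.swap 1 2)
    + f (Equiv.swap 0 1 * Equiv.swap 1 2) + f (Equiv.swap 0 2 * Equiv.swap 1 2) := by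
  rw [show (Finset.univ : Finset (Equiv.Perm (Fin 3))) =
    {1, Equiv.swap 0 1, Equiv.swap 0 2, Equiv.swap 1 2,
     Equiv.swap 0 1 * Equiv.swap 1 2, Equiv.swap 0 2 * Equiv.swap 1 2} from by decide]
  rw [Finset.sum_insert (by decide), Finset.sum_insert (by decide),
      Finset.sum_insert (by decide), Finset.sum_insert (by decide),
      Finset.sum_insert (by decide), Finset.sum_singleton]
  ring

/-- The key quantity: for each permutation σ, the partial trace sum. -/
def KK (n : ℕ) (g : Sq n) (σ : Equiv.Perm (Fin 3)) : ℂ :=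
  ∑ x : Fin 3 → Fin n, g ![x 0, x 1] *
    ∑ y : Fin 2 → Fin n, conj (g y) * (if (![y 0, y 1, x 2] ∘ ⇑σ) = x then (1:ℂ) else 0)

section KKvals
variable {n : ℕ} (g : Sq n)

lemma hswap (hanti : ∀ y : Fin 2 → Fin n, g (y ∘ Equiv.swap 0 1) = -g y) (a b : Fin n) : g ![b, a] = - g ![a, b] := by
  have := hanti ![a, b]
  have h : (![a, b] ∘ ⇑(Equiv.swap 0 1) : Fin 2 → Fin n) = ![b, a] := by
    funext i; fin_cases i <;> simp [Equiv.swap_apply_def]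
  rwa [h] at this

lemma hgsum (hg : ‖g‖ = 1) : ∑ a : Fin n, ∑ b : Fin n, g ![a, b] * conj (g ![a, b]) = 1 := by
  have h : (⟪g, g⟫_ℂ) = 1 := by
    rw [inner_self_eq_norm_sq_to_K, hg]; norm_num
  rw [PiLp.inner_apply] at h
  have h2 : ∑ y : Fin 2 → Fin n, conj (g y) * g y = 1 := by
    rw [← h]; congr 1; funext i; rw [RCLike.inner_apply]; ring
  rw [sum2] at h2
  rw [← h2]
  congr 1; funext a; congr 1; funext b; ring

lemma hgsum' (hg : ‖g‖ = 1) (hanti : ∀ y : Fin 2 → Fin n, g (y ∘ Equiv.swap 0 1) = -g y) : ∑ a : Fin n, ∑ b : Fin n, g ![a, b] * conj (g ![b, a]) = -1 := by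
  have : ∀ a b : Fin n, g ![a, b] * conj (g ![b, a]) = -(g ![a,b] * conj (g ![a,b])) := by
    intro a b
    rw [hswap g hanti]
    simp [mul_comm]
  simp only [this, Finset.sum_neg_distrib]
  rw [show (∑ a : Fin n, ∑ b : Fin n, g ![a, b] * conj (g ![a, b])) = 1 from hgsum g hg]

lemma KK_eval (σ : Equiv.Perm (Fin 3)) : KK n g σ =
    ∑ a : Fin n, ∑ b : Fin n, ∑ c : Fin n, g ![a, b] *
      ∑ p : Fin n, ∑ q : Fin n, conj (g ![p, q]) *
        (if (![p, q, c] ∘ ⇑σ) = ![a, b, c] then (1:ℂ) else 0) := by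
  rw [KK, sum3]
  congr 1; funext a; congr 1; funext b; congr 1; funext c
  rw [sum2 (f := fun y => conj (g y) * (if (![y 0, y 1, ![a,b,c] 2] ∘ ⇑σ) = ![a,b,c] then (1:ℂ) else 0))]
  simp [Matrix.cons_val_zero, Matrix.cons_val_one]

lemma vec3_eq_iff {n : ℕ} (u v w a b c : Fin n) :
    (![u, v, w] = ![a, b, c]) ↔ (u = a ∧ v = b ∧ w = c) := by
  constructor
  · intro h
    exact ⟨congrFun h 0, congrFun h 1, congrFun h 2⟩
  · rintro ⟨rfl, rfl, rfl⟩
    rfl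

lemma sum_if_const {α : Type*} [Fintype α] (P : Prop) [Decidable P] (f : α → ℂ) :
    (∑ x : α, if P then f x else 0) = if P then ∑ x : α, f x else 0 := by
  by_cases h : P <;> simp [h]

lemma KK_one (hg : ‖g‖ = 1) : KK n g 1 = (n : ℂ) := by
  rw [KK_eval]
  have hc : ∀ p q c : Fin n, (![p, q, c] ∘ ⇑(1 : Equiv.Perm (Fin 3)) : Fin 3 → Fin n) = ![p, q, c] := by
    intro p q c; funext i; fin_cases i <;> rfl
  simp only [hc, vec3_eq_iff, and_true, true_and]
  simp only [mul_ite, mul_one, mul_zero, ite_and, sum_if_const,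
    Finset.sum_ite_eq, Finset.sum_ite_eq', Finset.mem_univ, if_true,
    Finset.sum_const, Finset.card_univ, Fintype.card_fin, nsmul_eq_mul]
  simp only [← Finset.mul_sum]
  rw [show (∑ a : Fin n, ∑ b : Fin n, g ![a, b] * conj (g ![a, b])) = 1 from hgsum g hg, mul_one]

lemma KK_swap01 (hg : ‖g‖ = 1)
    (hanti : ∀ y : Fin 2 → Fin n, g (y ∘ Equiv.swap 0 1) = -g y) :
    KK n g (Equiv.swap 0 1) = -(n : ℂ) := by
  rw [KK_eval]
  have hc : ∀ p q c : Fin n, (![p, q, c] ∘ ⇑(Equiv.swap (0:Fin 3) 1) : Fin 3 → Fin n) = ![q, p, c] := by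
    intro p q c; funext i; fin_cases i <;> simp [Equiv.swap_apply_def] <;> rfl
  simp only [hc, vec3_eq_iff, and_true, true_and]
  simp only [mul_ite, mul_one, mul_zero, ite_and, sum_if_const,
    Finset.sum_ite_eq, Finset.sum_ite_eq', Finset.mem_univ, if_true,
    Finset.sum_const, Finset.card_univ, Fintype.card_fin, nsmul_eq_mul]
  simp only [← Finset.mul_sum]
  rw [show (∑ a : Fin n, ∑ b : Fin n, g ![a, b] * conj (g ![b, a])) = -1 from
    hgsum' g hg hanti]
  ring

lemma KK_swap02 (hg : ‖g‖ = 1) :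
    KK n g (Equiv.swap 0 2) = 1 := by
  rw [KK_eval]
  have hc : ∀ p q c : Fin n, (![p, q, c] ∘ ⇑(Equiv.swap (0:Fin 3) 2) : Fin 3 → Fin n) = ![c, q, p] := by
    intro p q c; funext i; fin_cases i <;> simp [Equiv.swap_apply_def] <;> rfl
  simp only [hc, vec3_eq_iff, and_true, true_and]
  simp only [mul_ite, mul_one, mul_zero, ite_and, sum_if_const,
    Finset.sum_ite_eq, Finset.sum_ite_eq', Finset.mem_univ, if_true,
    Finset.sum_const, Finset.card_univ, Fintype.card_fin, nsmul_eq_mul]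
  exact hgsum g hg

lemma KK_swap12 (hg : ‖g‖ = 1) :
    KK n g (Equiv.swap 1 2) = 1 := by
  rw [KK_eval]
  have hc : ∀ p q c : Fin n, (![p, q, c] ∘ ⇑(Equiv.swap (1:Fin 3) 2) : Fin 3 → Fin n) = ![p, c, q] := by
    intro p q c; funext i; fin_cases i <;> simp [Equiv.swap_apply_def] <;> rfl
  simp only [hc, vec3_eq_iff, and_true, true_and]
  simp only [mul_ite, mul_one, mul_zero, ite_and, sum_if_const,
    Finset.sum_ite_eq, Finset.sum_ite_eq', Finset.mem_univ, if_true,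
    Finset.sum_const, Finset.card_univ, Fintype.card_fin, nsmul_eq_mul]
  exact hgsum g hg

lemma KK_cyc1 (hg : ‖g‖ = 1)
    (hanti : ∀ y : Fin 2 → Fin n, g (y ∘ Equiv.swap 0 1) = -g y) :
    KK n g (Equiv.swap 0 1 * Equiv.swap 1 2) = -1 := by
  rw [KK_eval]
  have hc : ∀ p q c : Fin n, (![p, q, c] ∘ ⇑(Equiv.swap 0 1 * Equiv.swap 1 2 : Equiv.Perm (Fin 3)) : Fin 3 → Fin n) = ![q, c, p] := by
    intro p q c; funext i; fin_cases i <;> rfl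
  simp only [hc, vec3_eq_iff, and_true, true_and]
  simp only [mul_ite, mul_one, mul_zero, ite_and, sum_if_const,
    Finset.sum_ite_eq, Finset.sum_ite_eq', Finset.mem_univ, if_true,
    Finset.sum_const, Finset.card_univ, Fintype.card_fin, nsmul_eq_mul]
  exact hgsum' g hg hanti

lemma KK_cyc2 (hg : ‖g‖ = 1)
    (hanti : ∀ y : Fin 2 → Fin n, g (y ∘ Equiv.swap 0 1) = -g y) :
    KK n g (Equiv.swap 0 2 * Equiv.swap 1 2) = -1 := by
  rw [KK_eval]
  have hc : ∀ p q c : Fin n, (![p, q, c] ∘ ⇑(Equiv.swap 0 2 * Equiv.swap 1 2 : Equiv.Perm (Fin 3)) : Fin 3 → Fin n) = ![c, p, q] := by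
    intro p q c; funext i; fin_cases i <;> rfl
  simp only [hc, vec3_eq_iff, and_true, true_and]
  simp only [mul_ite, mul_one, mul_zero, ite_and, sum_if_const,
    Finset.sum_ite_eq, Finset.sum_ite_eq', Finset.mem_univ, if_true,
    Finset.sum_const, Finset.card_univ, Fintype.card_fin, nsmul_eq_mul]
  exact hgsum' g hg hanti

end KKvals

lemma S_eq (n : ℕ) (g : Sq n) :
    ∑ x : Fin 3 → Fin n, ((pgI n g ∘ₗ alt3 n) (EuclideanSpace.single x 1)) x
      = (6:ℂ)⁻¹ * ∑ σ : Equiv.Perm (Fin 3), ((Equiv.Perm.sign σ : ℤ) : ℂ) * KK n g σ := by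
  have hx : ∀ x : Fin 3 → Fin n,
      ((pgI n g ∘ₗ alt3 n) (EuclideanSpace.single x 1)) x
      = ∑ σ : Equiv.Perm (Fin 3), (6:ℂ)⁻¹ * (((Equiv.Perm.sign σ : ℤ) : ℂ) *
          (g ![x 0, x 1] * ∑ y : Fin 2 → Fin n, conj (g y) *
            (if (![y 0, y 1, x 2] ∘ ⇑σ) = x then (1:ℂ) else 0))) := by
    intro x
    show g ![x 0, x 1] * ∑ y : Fin 2 → Fin n,
        conj (g y) * alt3 n (EuclideanSpace.single x 1) ![y 0, y 1, x 2] = _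
    have ha : ∀ y : Fin 2 → Fin n,
        alt3 n (EuclideanSpace.single x 1) ![y 0, y 1, x 2]
        = (6:ℂ)⁻¹ * ∑ σ : Equiv.Perm (Fin 3), ((Equiv.Perm.sign σ : ℤ) : ℂ) *
            (if (![y 0, y 1, x 2] ∘ ⇑σ) = x then (1:ℂ) else 0) := by
      intro y
      show (6:ℂ)⁻¹ * _ = _
      congr 1
      apply Finset.sum_congr rfl
      intro σ _
      congr 1
      exact EuclideanSpace.single_apply x 1 _
    simp only [ha, Finset.mul_sum]
    rw [Finset.sum_comm]
    apply Finset.sum_congr rfl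
    intro σ _
    apply Finset.sum_congr rfl
    intro y _
    ring
  simp only [hx]
  rw [Finset.sum_comm, Finset.mul_sum]
  apply Finset.sum_congr rfl
  intro σ _
  rw [KK, ← Finset.mul_sum, ← Finset.mul_sum]

/-- Trace identity: tr T = n - 2 for any unit vector g ∈ Λ²H. -/
theorem stmt16 (n : ℕ) (hn : 3 ≤ n) (g : Sq n) (hg : ‖g‖ = 1)
    (hanti : ∀ y : Fin 2 → Fin n, g (y ∘ Equiv.swap 0 1) = -g y) :
    ∑ x : Fin 3 → Fin n, (T3 n g (EuclideanSpace.single x 1)) x = (n : ℂ) - 2 := by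
  have hperm : ∀ σ : Equiv.Perm (Fin 3), True := fun _ => trivial
  have htr : ∑ x : Fin 3 → Fin n, (T3 n g (EuclideanSpace.single x 1)) x
      = LinearMap.trace ℂ (Cube n) (T3 n g) := trace_eq n _
  have hcyc : LinearMap.trace ℂ (Cube n) (alt3 n ∘ₗ pgI n g ∘ₗ alt3 n)
      = LinearMap.trace ℂ (Cube n) (pgI n g ∘ₗ alt3 n) := by
    have h1 : alt3 n ∘ₗ pgI n g ∘ₗ alt3 n = (alt3 n) * (pgI n g * alt3 n) := rfl
    rw [h1, LinearMap.trace_mul_comm]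
    have h2 : pgI n g * alt3 n * alt3 n = pgI n g ∘ₗ (alt3 n ∘ₗ alt3 n) := rfl
    rw [h2, alt3_idem]
  have hS : LinearMap.trace ℂ (Cube n) (pgI n g ∘ₗ alt3 n)
      = (6:ℂ)⁻¹ * ∑ σ : Equiv.Perm (Fin 3), ((Equiv.Perm.sign σ : ℤ) : ℂ) * KK n g σ := by
    rw [← trace_eq, S_eq]
  have hsum : ∑ σ : Equiv.Perm (Fin 3), ((Equiv.Perm.sign σ : ℤ) : ℂ) * KK n g σ
      = 2 * n - 4 := by
    rw [perm6 (fun σ => ((Equiv.Perm.sign σ : ℤ) : ℂ) * KK n g σ)]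
    rw [KK_one g hg, KK_swap01 g hg hanti, KK_swap02 g hg, KK_swap12 g hg,
        KK_cyc1 g hg hanti, KK_cyc2 g hg hanti]
    have s1 : Equiv.Perm.sign (1 : Equiv.Perm (Fin 3)) = 1 := by decide
    have s2 : Equiv.Perm.sign (Equiv.swap (0:Fin 3) 1) = -1 := by decide
    have s3 : Equiv.Perm.sign (Equiv.swap (0:Fin 3) 2) = -1 := by decide
    have s4 : Equiv.Perm.sign (Equiv.swap (1:Fin 3) 2) = -1 := by decide
    have s5 : Equiv.Perm.sign (Equiv.swap 0 1 * Equiv.swap 1 2 : Equiv.Perm (Fin 3)) = 1 := by decide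
    have s6 : Equiv.Perm.sign (Equiv.swap 0 2 * Equiv.swap 1 2 : Equiv.Perm (Fin 3)) = 1 := by decide
    rw [s1, s2, s3, s4, s5, s6]
    push_cast
    ring
  rw [htr]
  rw [show T3 n g = (3:ℂ) • (alt3 n ∘ₗ pgI n g ∘ₗ alt3 n) from rfl, map_smul]
  rw [hcyc, hS, hsum]
  simp only [smul_eq_mul]
  ring

end
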